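/- Let n ≥ 1, let A be an n×n integer matrix with det A ≠ 0, set d := |det A|, and let β : Fin d → ℤⁿ be such that the induced map Fin d → ℤⁿ/A(ℤⁿ) is a bijection. Let r ∈ ℕ and Ψ₁, …, Ψ_r, ξ : ℝⁿ → ℂ satisfy: (a) for each 1 ≤ k ≤ r and each y ∈ ℝⁿ, the family (conj(Ψ_k(y+v))·ξ(y+v))_{v ∈ ℤⁿ} is absolutely summable; (b) for every y ∈ ℝⁿ, ξ(y) = ∑_{k=1}^{r} Ψ_k(y) · ( ∑_{v ∈ ℤⁿ} conj(Ψ_k(y+v)) ξ(y+v) ). Define ζ(x) = d^{−1/2} ξ((Aᵀ)⁻¹x) and, for β ∈ ℤⁿ, (Dε_β Ψ)(x) = d^{−1/2} e(−β · (Aᵀ)⁻¹x) Ψ((Aᵀ)⁻¹x). Then for every x ∈ ℝⁿ, each family (conj((Dε_{β(l)}Ψ_k)(x+v))·ζ(x+v))_{v ∈ ℤⁿ} is absolutely summable, and ζ(x) = ∑_{k=1}^{r} ∑_{l=0}^{d−1} (Dε_{β(l)}Ψ_k)(x) · ( ∑_{v ∈ ℤⁿ} conj((Dε_{β(l)}Ψ_k)(x+v))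 ζ(x+v) ). -/

import Mathlib

/-- The exponential function `e(r) = e^{2πir}`. -/
noncomputable def e (r : ℝ) : ℂ := Complex.exp (2 * Real.pi * Complex.I * r)

/-- The frequency-domain dilation for an integer matrix `A`:
`(Dξ)(x) = |det A|^{−1/2} ξ((Aᵀ)⁻¹x)`. -/
noncomputable def Dil (n : ℕ) (A : Matrix (Fin n) (Fin n) ℤ)
    (ξ : (Fin n → ℝ) → ℂ) (x : Fin n → ℝ) : ℂ :=
  ((Real.sqrt |(A.det : ℝ)|)⁻¹ : ℝ) *
    ξ ((A.map (Int.cast : ℤ → ℝ)).transpose⁻¹.mulVec x)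

/-- The operator `Dε_β` for an integer matrix `A`:
`(Dε_β Ψ)(x) = |det A|^{−1/2} e(−β·(Aᵀ)⁻¹x) Ψ((Aᵀ)⁻¹x)`. -/
noncomputable def Deps (n : ℕ) (A : Matrix (Fin n) (Fin n) ℤ) (β : Fin n → ℤ)
    (Ψ : (Fin n → ℝ) → ℂ) (x : Fin n → ℝ) : ℂ :=
  ((Real.sqrt |(A.det : ℝ)|)⁻¹ : ℝ) *
    e (-(∑ i : Fin n,
      (β i : ℝ) * ((A.map (Int.cast : ℤ → ℝ)).transpose⁻¹.mulVec x) i)) *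
    Ψ ((A.map (Int.cast : ℤ → ℝ)).transpose⁻¹.mulVec x)

lemma e_add (s t : ℝ) : e (s + t) = e s * e t := by
  simp [e, ← Complex.exp_add]; ring_nf

lemma e_int (m : ℤ) : e m = 1 := by
  have := Complex.exp_int_mul_two_pi_mul_I m
  rw [e, ← this]
  norm_cast
  ring_nf

lemma e_conj (r : ℝ) : (starRingEnd ℂ) (e r) = e (-r) := by
  rw [e, e, ← Complex.exp_conj]
  congr 1
  simp only [map_mul, Complex.conj_I, Complex.conj_ofReal, map_ofNat]
  push_cast
  ring

lemma e_norm (r : ℝ) : ‖e r‖ = 1 := by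
  rw [e, Complex.norm_exp]
  have : (2 * ↑Real.pi * Complex.I * ↑r).re = 0 := by simp [Complex.mul_re]
  simp [this]

lemma e_neg_mul (r : ℝ) : e (-r) * e r = 1 := by
  rw [← e_add]
  simpa using e_int 0

section mat
variable {n : ℕ} (A : Matrix (Fin n) (Fin n) ℤ) (hA : A.det ≠ 0)

lemma detT : ((A.map (Int.cast : ℤ → ℝ)).transpose).det = (A.det : ℝ) := by
  rw [Matrix.det_transpose]
  have := RingHom.map_det (Int.castRingHom ℝ) A
  simpa [RingHom.mapMatrix_apply] using this.symm

lemma cast_mulVec (v : Fin n → ℤ) :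
    (fun i => ((A.transpose.mulVec v) i : ℝ)) =
      (A.map (Int.cast : ℤ → ℝ)).transpose.mulVec (fun i => (v i : ℝ)) := by
  funext i
  simp [Matrix.mulVec, dotProduct, Matrix.transpose, Matrix.map]

lemma B_T (hA : A.det ≠ 0) (u : Fin n → ℝ) :
    ((A.map (Int.cast : ℤ → ℝ)).transpose)⁻¹.mulVec
      (((A.map (Int.cast : ℤ → ℝ)).transpose).mulVec u) = u := by
  rw [Matrix.mulVec_mulVec, Matrix.nonsing_inv_mul, Matrix.one_mulVec]
  rw [detT]
  exact isUnit_iff_ne_zero.2 (by exact_mod_cast hA)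

lemma intMulVec_inj (hA : A.det ≠ 0) :
    Function.Injective (fun v : Fin n → ℤ => A.transpose.mulVec v) := by
  intro u v huv
  have h2 : ∀ w, (A.transpose.adjugate).mulVec (A.transpose.mulVec w) = A.det • w := by
    intro w
    rw [Matrix.mulVec_mulVec, Matrix.adjugate_mul, Matrix.det_transpose,
      Matrix.smul_mulVec, Matrix.one_mulVec]
  have := congrArg (A.transpose.adjugate).mulVec huv
  simp only [h2] at this
  funext i
  have := congrFun this i
  simp only [Pi.smul_apply, smul_eq_mul] at this
  exact mul_left_cancel₀ hA this

lemma det_smul_mem (z : Fin n → ℤ) :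
    A.det • z ∈ LinearMap.range (A.transpose).mulVecLin := by
  refine ⟨(A.transpose.adjugate).mulVec z, ?_⟩
  simp only [Matrix.mulVecLin_apply, Matrix.mulVec_mulVec, Matrix.mul_adjugate,
    Matrix.det_transpose, Matrix.smul_mulVec, Matrix.one_mulVec]

lemma quot_finite (hA : A.det ≠ 0) :
    Finite ((Fin n → ℤ) ⧸ LinearMap.range (A.transpose).mulVecLin) := by
  set D : ℕ := A.det.natAbs with hD
  haveI : NeZero D := ⟨by simpa [hD] using hA⟩
  apply Finite.of_surjective (fun c : Fin n → ZMod D =>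
    (Submodule.Quotient.mk (fun i => ((c i).val : ℤ)) :
      (Fin n → ℤ) ⧸ LinearMap.range (A.transpose).mulVecLin))
  intro q
  obtain ⟨v, rfl⟩ := Submodule.Quotient.mk_surjective _ q
  refine ⟨fun i => (v i : ZMod D), ?_⟩
  rw [Submodule.Quotient.eq]
  have hdvd : ∀ i, (D : ℤ) ∣ ((((v i : ZMod D)).val : ℤ) - v i) := by
    intro i
    rw [← ZMod.intCast_zmod_eq_zero_iff_dvd]
    push_cast
    simp [ZMod.natCast_val, ZMod.intCast_cast]
  choose w hw using hdvd
  have hvec : (fun i => (((v i : ZMod D)).val : ℤ)) - v = (D : ℤ) • w := by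
    funext i
    simp only [Pi.sub_apply, Pi.smul_apply, smul_eq_mul]
    exact hw i
  rw [hvec]
  rcases Int.natAbs_eq A.det with h | h
  · have : (D : ℤ) • w = A.det • w := by rw [hD, ← h]
    rw [this]; exact det_smul_mem A w
  · have : (D : ℤ) • w = A.det • (-w) := by
      rw [hD]
      funext i; simp only [Pi.smul_apply, smul_eq_mul, Pi.neg_apply]
      rw [show (A.det.natAbs : ℤ) = -A.det from by omega]
      ring
    rw [this]; exact det_smul_mem A (-w)

lemma summable_B (hA : A.det ≠ 0) (f : (Fin n → ℝ) → ℝ) (hf : ∀ w, 0 ≤ f w)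
    (hsum : ∀ y : Fin n → ℝ,
      Summable (fun v : Fin n → ℤ => f (y + fun i => (v i : ℝ)))) :
    Summable (fun v : Fin n → ℤ =>
      f (((A.map (Int.cast : ℤ → ℝ)).transpose)⁻¹.mulVec (fun i => (v i : ℝ)))) := by
  haveI : Finite ((Fin n → ℤ) ⧸ LinearMap.range (A.transpose).mulVecLin) :=
    quot_finite A hA
  set S := LinearMap.range (A.transpose).mulVecLin with hS
  obtain ⟨rep, hrep⟩ := (Submodule.Quotient.mk_surjective S).hasRightInverse
  set B := ((A.map (Int.cast : ℤ → ℝ)).transpose)⁻¹ with hB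
  have key : ∀ (q) (u : Fin n → ℤ),
      B.mulVec (fun i => ((rep q + A.transpose.mulVec u) i : ℝ)) =
        (B.mulVec (fun i => ((rep q i : ℤ) : ℝ))) + fun i => (u i : ℝ) := by
    intro q u
    have : (fun i => ((rep q + A.transpose.mulVec u) i : ℝ)) =
        (fun i => ((rep q i : ℤ) : ℝ)) +
          (A.map (Int.cast : ℤ → ℝ)).transpose.mulVec (fun i => (u i : ℝ)) := by
      rw [← cast_mulVec]
      funext i
      simp only [Pi.add_apply]
      push_cast
      ring
    rw [this, Matrix.mulVec_add, B_T A hA]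
  have hg : Function.Bijective (fun p : ((Fin n → ℤ) ⧸ S) × (Fin n → ℤ) =>
      rep p.1 + A.transpose.mulVec p.2) := by
    constructor
    · rintro ⟨q, u⟩ ⟨q', u'⟩ h
      simp only at h
      have hq : q = q' := by
        have h1 : (Submodule.Quotient.mk (rep q + A.transpose.mulVec u) :
            (Fin n → ℤ) ⧸ S) = Submodule.Quotient.mk (rep q) := by
          rw [Submodule.Quotient.eq]
          have h3 : rep q + A.transpose.mulVec u - rep q = A.transpose.mulVec u := by abel
          rw [h3]; exact ⟨u, rfl⟩
        have h2 : (Submodule.Quotient.mk (rep q' + A.transpose.mulVec u') :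
            (Fin n → ℤ) ⧸ S) = Submodule.Quotient.mk (rep q') := by
          rw [Submodule.Quotient.eq]
          have h3 : rep q' + A.transpose.mulVec u' - rep q' = A.transpose.mulVec u' := by abel
          rw [h3]; exact ⟨u', rfl⟩
        have := h1.symm.trans ((congrArg _ h).trans h2)
        rwa [hrep q, hrep q'] at this
      subst hq
      have : A.transpose.mulVec u = A.transpose.mulVec u' := by
        have := add_left_cancel h
        exact this
      have := intMulVec_inj A hA this
      simp [this]
    · intro v
      have hv : (Submodule.Quotient.mk v : (Fin n → ℤ) ⧸ S) =
          Submodule.Quotient.mk (rep (Submodule.Quotient.mk v)) :=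
        (hrep _).symm
      rw [Submodule.Quotient.eq] at hv
      obtain ⟨u, hu⟩ := hv
      exact ⟨⟨Submodule.Quotient.mk v, u⟩, by
        simp only [Matrix.mulVecLin_apply] at hu
        simp [hu]⟩
  refine ((Equiv.ofBijective _ hg).summable_iff).1 ?_
  have heq : ((fun v : Fin n → ℤ => f (B.mulVec (fun i => (v i : ℝ)))) ∘
      (Equiv.ofBijective _ hg)) = fun p : ((Fin n → ℤ) ⧸ S) × (Fin n → ℤ) =>
        f ((B.mulVec (fun i => ((rep p.1 i : ℤ) : ℝ))) + fun i => (p.2 i : ℝ)) := by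
    funext p
    simp only [Function.comp_apply, Equiv.ofBijective_apply]
    rw [key p.1 p.2]
  rw [heq]
  refine (summable_prod_of_nonneg (fun p => hf _)).2 ⟨?_, ?_⟩
  · intro q
    exact hsum (B.mulVec fun i => ((rep q i : ℤ) : ℝ))
  · exact Summable.of_finite

lemma T_B (hA : A.det ≠ 0) (u : Fin n → ℝ) :
    ((A.map (Int.cast : ℤ → ℝ)).transpose).mulVec
      (((A.map (Int.cast : ℤ → ℝ)).transpose)⁻¹.mulVec u) = u := by
  rw [Matrix.mulVec_mulVec, Matrix.mul_nonsing_inv, Matrix.one_mulVec]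
  rw [detT]
  exact isUnit_iff_ne_zero.2 (by exact_mod_cast hA)

end mat

lemma e_eq_one_iff (t : ℝ) : e t = 1 ↔ ∃ m : ℤ, t = m := by
  rw [e, Complex.exp_eq_one_iff]
  constructor
  · rintro ⟨m, hm⟩
    refine ⟨m, ?_⟩
    have h2 : (2 * (Real.pi : ℂ) * Complex.I) ≠ 0 := by
      simp [Real.pi_ne_zero, Complex.I_ne_zero]
    have hm' : (t : ℂ) * (2 * (Real.pi : ℂ) * Complex.I) =
        (m : ℂ) * (2 * (Real.pi : ℂ) * Complex.I) := by rw [← hm]; ring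
    have := mul_right_cancel₀ h2 hm'
    exact_mod_cast this
  · rintro ⟨m, rfl⟩
    exact ⟨m, by push_cast; ring⟩

section char
open scoped Matrix
variable {n : ℕ} (A : Matrix (Fin n) (Fin n) ℤ)

lemma char_sum_mem (hA : A.det ≠ 0) (d : ℕ)
    (β : Fin d → (Fin n → ℤ))
    (v : Fin n → ℤ) (hv : v ∈ LinearMap.range (A.transpose).mulVecLin) :
    (∑ l : Fin d, e (∑ i : Fin n, (β l i : ℝ) *
      (((A.map (Int.cast : ℤ → ℝ)).transpose)⁻¹.mulVec (fun i => (v i : ℝ))) i)) = (d : ℂ) := by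
  set B := ((A.map (Int.cast : ℤ → ℝ)).transpose)⁻¹ with hB
  set u : Fin n → ℝ := B.mulVec (fun i => (v i : ℝ)) with hu
  obtain ⟨w, hw⟩ := hv
  simp only [Matrix.mulVecLin_apply] at hw
  have hu' : u = fun i => (w i : ℝ) := by
    rw [hu, ← hw, cast_mulVec, B_T A hA]
  have : ∀ l : Fin d, e (∑ i : Fin n, (β l i : ℝ) * u i) = 1 := by
    intro l
    rw [hu']
    have : (∑ i : Fin n, (β l i : ℝ) * (w i : ℝ)) = ((∑ i, β l i * w i : ℤ) : ℝ) := by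
      push_cast; ring
    rw [this, e_int]
  simp [this]

lemma char_sum_not_mem (hA : A.det ≠ 0) (d : ℕ)
    (β : Fin d → (Fin n → ℤ))
    (hβ : Function.Bijective (fun l : Fin d =>
      (Submodule.Quotient.mk (β l) :
        (Fin n → ℤ) ⧸ LinearMap.range A.mulVecLin)))
    (v : Fin n → ℤ) (hv : v ∉ LinearMap.range (A.transpose).mulVecLin) :
    (∑ l : Fin d, e (∑ i : Fin n, (β l i : ℝ) *
      (((A.map (Int.cast : ℤ → ℝ)).transpose)⁻¹.mulVec (fun i => (v i : ℝ))) i)) = 0 := by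
  set B := ((A.map (Int.cast : ℤ → ℝ)).transpose)⁻¹ with hB
  set u : Fin n → ℝ := B.mulVec (fun i => (v i : ℝ)) with hu
  have hTu : (A.map (Int.cast : ℤ → ℝ)).transpose.mulVec u = fun i => (v i : ℝ) := by
    rw [hu, T_B A hA]
  -- find a coordinate where u is not an integer
  have hexists : ∃ i₀ : Fin n, e (u i₀) ≠ 1 := by
    by_contra hcon
    push_neg at hcon
    have hint : ∀ i, ∃ m : ℤ, u i = m := fun i => (e_eq_one_iff (u i)).1 (hcon i)
    choose m hm using hint
    apply hv
    refine ⟨m, ?_⟩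
    simp only [Matrix.mulVecLin_apply]
    have hum : u = fun i => ((m i : ℤ) : ℝ) := funext hm
    have : (fun i => ((A.transpose.mulVec m) i : ℝ)) = fun i => ((v i : ℤ) : ℝ) := by
      rw [cast_mulVec, ← hum, hTu]
    funext i
    exact_mod_cast congrFun this i
  obtain ⟨i₀, hi₀⟩ := hexists
  -- the shift bijection
  set Q := (Fin n → ℤ) ⧸ LinearMap.range A.mulVecLin with hQ
  set eqv : Fin d ≃ Q := Equiv.ofBijective _ hβ with heqv
  set δ : Fin n → ℤ := Pi.single i₀ 1 with hδ
  set σ : Fin d ≃ Fin d :=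
    (eqv.trans (Equiv.addRight (Submodule.Quotient.mk δ : Q))).trans eqv.symm with hσ
  have hshift : ∀ l : Fin d,
      e (∑ i : Fin n, (β (σ l) i : ℝ) * u i) =
        e (∑ i : Fin n, (β l i : ℝ) * u i) * e (u i₀) := by
    intro l
    have hmk : (Submodule.Quotient.mk (β (σ l)) : Q) =
        Submodule.Quotient.mk (β l + δ) := by
      have h1 : (Submodule.Quotient.mk (β (σ l)) : Q) = eqv (σ l) := rfl
      have h2 : eqv (σ l) = eqv l + Submodule.Quotient.mk δ := by
        rw [hσ]
        simp
      rw [h1, h2]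
      have : (Submodule.Quotient.mk (β l + δ) : Q) =
          Submodule.Quotient.mk (β l) + Submodule.Quotient.mk δ := by
        rw [Submodule.Quotient.mk_add]
      rw [this]
      rfl
    rw [Submodule.Quotient.eq] at hmk
    obtain ⟨z, hz⟩ := hmk
    simp only [Matrix.mulVecLin_apply] at hz
    have hβσ : β (σ l) = β l + δ + A.mulVec z := by
      have := hz
      funext i
      have := congrFun hz i
      simp only [Pi.sub_apply, Pi.add_apply] at this ⊢
      omega
    have hAz : (∑ i : Fin n, ((A.mulVec z) i : ℝ) * u i) = ((z ⬝ᵥ v : ℤ) : ℝ) := by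
      have h1 : (fun i => ((A.mulVec z) i : ℝ)) =
          (A.map (Int.cast : ℤ → ℝ)).mulVec (fun i => (z i : ℝ)) := by
        funext i
        simp [Matrix.mulVec, dotProduct, Matrix.map]
      have h2 : (∑ i : Fin n, ((A.mulVec z) i : ℝ) * u i) =
          ((A.map (Int.cast : ℤ → ℝ)).mulVec (fun i => (z i : ℝ))) ⬝ᵥ u := by
        simp only [dotProduct]
        exact Finset.sum_congr rfl (fun i _ => by rw [← congrFun h1 i])
      rw [h2]
      have h3 : ((A.map (Int.cast : ℤ → ℝ)).mulVec (fun i => (z i : ℝ))) ⬝ᵥ u =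
          (fun i => (z i : ℝ)) ⬝ᵥ ((A.map (Int.cast : ℤ → ℝ)).transpose.mulVec u) := by
        simp only [Matrix.mulVec, dotProduct, Matrix.transpose_apply,
          Finset.sum_mul, Finset.mul_sum]
        rw [Finset.sum_comm]
        exact Finset.sum_congr rfl (fun i _ => Finset.sum_congr rfl (fun j _ => by ring))
      rw [h3, hTu]
      simp only [dotProduct]
      push_cast
      ring
    have hsplit : (∑ i : Fin n, (β (σ l) i : ℝ) * u i) =
        (∑ i : Fin n, (β l i : ℝ) * u i) + u i₀ + ((z ⬝ᵥ v : ℤ) : ℝ) := by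
      rw [hβσ, ← hAz]
      have hδu : (∑ i : Fin n, (δ i : ℝ) * u i) = u i₀ := by
        rw [hδ]
        rw [Finset.sum_eq_single i₀]
        · simp
        · intro j _ hj
          simp [Pi.single_apply, hj]
        · simp
      rw [← hδu, ← Finset.sum_add_distrib, ← Finset.sum_add_distrib]
      congr 1
      funext i
      simp only [Pi.add_apply]
      push_cast
      ring
    rw [hsplit, e_add, e_add, e_int]
    ring
  have hsum_eq : (∑ l : Fin d, e (∑ i : Fin n, (β l i : ℝ) * u i)) =
      (∑ l : Fin d, e (∑ i : Fin n, (β l i : ℝ) * u i)) * e (u i₀) :=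
    calc (∑ l : Fin d, e (∑ i : Fin n, (β l i : ℝ) * u i))
        = ∑ l : Fin d, e (∑ i : Fin n, (β (σ l) i : ℝ) * u i) :=
          (Equiv.sum_comp σ (fun l => e (∑ i : Fin n, (β l i : ℝ) * u i))).symm
      _ = ∑ l : Fin d, e (∑ i : Fin n, (β l i : ℝ) * u i) * e (u i₀) :=
          Finset.sum_congr rfl (fun l _ => hshift l)
      _ = (∑ l : Fin d, e (∑ i : Fin n, (β l i : ℝ) * u i)) * e (u i₀) := by
          rw [Finset.sum_mul]
  have hzero : (∑ l : Fin d, e (∑ i : Fin n, (β l i : ℝ) * u i)) * (e (u i₀) - 1) = 0 := by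
    rw [mul_sub, mul_one, ← hsum_eq, sub_self]
  exact (mul_eq_zero.1 hzero).resolve_right (sub_ne_zero.2 hi₀)

end char

section main
variable {n : ℕ} (A : Matrix (Fin n) (Fin n) ℤ)

lemma summand_eq (βl : Fin n → ℤ) (Ψk ξ : (Fin n → ℝ) → ℂ)
    (x : Fin n → ℝ) (v : Fin n → ℤ) :
    (starRingEnd ℂ) (Deps n A βl Ψk (x + fun i => (v i : ℝ))) *
      Dil n A ξ (x + fun i => (v i : ℝ)) =
    (((Real.sqrt |(A.det : ℝ)|)⁻¹ : ℝ) : ℂ) * (((Real.sqrt |(A.det : ℝ)|)⁻¹ : ℝ) : ℂ) *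
      e (∑ i, (βl i : ℝ) * (((A.map (Int.cast : ℤ → ℝ)).transpose)⁻¹.mulVec x) i) *
      (e (∑ i, (βl i : ℝ) *
          (((A.map (Int.cast : ℤ → ℝ)).transpose)⁻¹.mulVec (fun i => (v i : ℝ))) i) *
        ((starRingEnd ℂ) (Ψk ((((A.map (Int.cast : ℤ → ℝ)).transpose)⁻¹.mulVec x) +
            ((A.map (Int.cast : ℤ → ℝ)).transpose)⁻¹.mulVec (fun i => (v i : ℝ)))) *
          ξ ((((A.map (Int.cast : ℤ → ℝ)).transpose)⁻¹.mulVec x) +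
            ((A.map (Int.cast : ℤ → ℝ)).transpose)⁻¹.mulVec (fun i => (v i : ℝ))))) := by
  simp only [Deps, Dil, Matrix.mulVec_add]
  have hsplit : (∑ i, (βl i : ℝ) *
      ((((A.map (Int.cast : ℤ → ℝ)).transpose)⁻¹.mulVec x) +
        ((A.map (Int.cast : ℤ → ℝ)).transpose)⁻¹.mulVec (fun i => (v i : ℝ))) i) =
      (∑ i, (βl i : ℝ) * (((A.map (Int.cast : ℤ → ℝ)).transpose)⁻¹.mulVec x) i) +
      (∑ i, (βl i : ℝ) *
        (((A.map (Int.cast : ℤ → ℝ)).transpose)⁻¹.mulVec (fun i => (v i : ℝ))) i) := by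
    rw [← Finset.sum_add_distrib]
    exact Finset.sum_congr rfl (fun i _ => by simp [Pi.add_apply, mul_add])
  rw [hsplit]
  simp only [map_mul, Complex.conj_ofReal, e_conj, neg_neg]
  rw [e_add]
  ring

lemma summand_norm (βl : Fin n → ℤ) (Ψk ξ : (Fin n → ℝ) → ℂ)
    (x : Fin n → ℝ) (v : Fin n → ℤ) :
    ‖(starRingEnd ℂ) (Deps n A βl Ψk (x + fun i => (v i : ℝ))) *
      Dil n A ξ (x + fun i => (v i : ℝ))‖ =
    ((Real.sqrt |(A.det : ℝ)|)⁻¹ * (Real.sqrt |(A.det : ℝ)|)⁻¹) *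
      ‖(starRingEnd ℂ) (Ψk ((((A.map (Int.cast : ℤ → ℝ)).transpose)⁻¹.mulVec x) +
          ((A.map (Int.cast : ℤ → ℝ)).transpose)⁻¹.mulVec (fun i => (v i : ℝ)))) *
        ξ ((((A.map (Int.cast : ℤ → ℝ)).transpose)⁻¹.mulVec x) +
          ((A.map (Int.cast : ℤ → ℝ)).transpose)⁻¹.mulVec (fun i => (v i : ℝ)))‖ := by
  rw [summand_eq]
  have hc : ‖((((Real.sqrt |(A.det : ℝ)|)⁻¹ : ℝ)) : ℂ)‖ = (Real.sqrt |(A.det : ℝ)|)⁻¹ := by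
    rw [Complex.norm_real, Real.norm_eq_abs]
    exact abs_of_nonneg (inv_nonneg.2 (Real.sqrt_nonneg _))
  rw [norm_mul, norm_mul, norm_mul, hc, e_norm, norm_mul, e_norm]
  ring

end main

/-- Frame propagation: if the finite family `Ψ₁,…,Ψ_r`
reproduces `ξ` via the `C(𝕋ⁿ)`-valued inner product, and `β` enumerates coset
representatives of `ℤⁿ/A(ℤⁿ)`, then the modulated dilates `Dε_{β_l}Ψ_k`
reproduce `ζ = Dξ`. -/
theorem stmt_10 (n : ℕ) (hn : 1 ≤ n) (A : Matrix (Fin n) (Fin n) ℤ)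
    (hA : A.det ≠ 0) (d : ℕ) (hd : (d : ℤ) = |A.det|)
    (β : Fin d → (Fin n → ℤ))
    (hβ : Function.Bijective (fun l : Fin d =>
      (Submodule.Quotient.mk (β l) :
        (Fin n → ℤ) ⧸ LinearMap.range A.mulVecLin)))
    (r : ℕ) (Ψ : Fin r → (Fin n → ℝ) → ℂ) (ξ : (Fin n → ℝ) → ℂ)
    (ha : ∀ (k : Fin r) (y : Fin n → ℝ),
      Summable (fun v : Fin n → ℤ =>
        ‖(starRingEnd ℂ) (Ψ k (y + fun i => (v i : ℝ))) * ξ (y + fun i => (v i : ℝ))‖))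
    (hb : ∀ y : Fin n → ℝ,
      ξ y = ∑ k : Fin r, Ψ k y *
        ∑' v : Fin n → ℤ,
          (starRingEnd ℂ) (Ψ k (y + fun i => (v i : ℝ))) * ξ (y + fun i => (v i : ℝ))) :
    ∀ x : Fin n → ℝ,
      (∀ (k : Fin r) (l : Fin d),
        Summable (fun v : Fin n → ℤ =>
          ‖(starRingEnd ℂ) (Deps n A (β l) (Ψ k) (x + fun i => (v i : ℝ))) *
            Dil n A ξ (x + fun i => (v i : ℝ))‖)) ∧
      Dil n A ξ x = ∑ k : Fin r, ∑ l : Fin d,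
        Deps n A (β l) (Ψ k) x *
          ∑' v : Fin n → ℤ,
            (starRingEnd ℂ) (Deps n A (β l) (Ψ k) (x + fun i => (v i : ℝ))) *
              Dil n A ξ (x + fun i => (v i : ℝ)) := by
  intro x
  -- numeric facts
  have hDne : ((A.det : ℝ)) ≠ 0 := by exact_mod_cast hA
  have hDpos : (0:ℝ) < |(A.det : ℝ)| := abs_pos.2 hDne
  have hdR : ((d : ℕ) : ℝ) = |(A.det : ℝ)| := by
    have h := congrArg (fun z : ℤ => (z : ℝ)) hd
    push_cast at h
    rw [← Int.cast_abs, ← hd]; norm_cast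
  have hsne : Real.sqrt |(A.det : ℝ)| ≠ 0 := ne_of_gt (Real.sqrt_pos.2 hDpos)
  have hcc : ((Real.sqrt |(A.det : ℝ)|)⁻¹ : ℝ) * ((Real.sqrt |(A.det : ℝ)|)⁻¹ : ℝ) * ((d : ℕ) : ℝ) = 1 := by
    rw [hdR, ← Real.mul_self_sqrt (abs_nonneg ((A.det : ℝ)))]
    field_simp
    rw [Real.sqrt_sq (Real.sqrt_nonneg _)]
  have hccc : ((((Real.sqrt |(A.det : ℝ)|)⁻¹ : ℝ) : ℂ)) * ((Real.sqrt |(A.det : ℝ)|)⁻¹ : ℝ) * ((Real.sqrt |(A.det : ℝ)|)⁻¹ : ℝ) * ((d : ℕ) : ℂ) = ((((Real.sqrt |(A.det : ℝ)|)⁻¹ : ℝ) : ℂ)) := by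
    have h1 : ((((Real.sqrt |(A.det : ℝ)|)⁻¹ : ℝ) : ℂ)) * ((((Real.sqrt |(A.det : ℝ)|)⁻¹ : ℝ) : ℂ)) * ((d : ℕ) : ℂ) = 1 := by
      have h2 := congrArg (fun t : ℝ => (t : ℂ)) hcc
      simpa [Complex.ofReal_mul] using h2
    calc ((((Real.sqrt |(A.det : ℝ)|)⁻¹ : ℝ) : ℂ)) * ((Real.sqrt |(A.det : ℝ)|)⁻¹ : ℝ) * ((Real.sqrt |(A.det : ℝ)|)⁻¹ : ℝ) * ((d : ℕ) : ℂ)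
        = (((((Real.sqrt |(A.det : ℝ)|)⁻¹ : ℝ) : ℂ)) * ((((Real.sqrt |(A.det : ℝ)|)⁻¹ : ℝ) : ℂ)) * ((d : ℕ) : ℂ)) * ((Real.sqrt |(A.det : ℝ)|)⁻¹ : ℝ) := by ring
      _ = 1 * ((Real.sqrt |(A.det : ℝ)|)⁻¹ : ℝ) := by rw [h1]
      _ = ((((Real.sqrt |(A.det : ℝ)|)⁻¹ : ℝ) : ℂ)) := by rw [one_mul]
  -- core summability
  have hcore : ∀ k : Fin r, Summable (fun v : Fin n → ℤ =>
      ‖(starRingEnd ℂ) (Ψ k ((A.map (Int.cast : ℤ → ℝ)).transpose⁻¹.mulVec x + (A.map (Int.cast : ℤ → ℝ)).transpose⁻¹.mulVec (fun i => (v i : ℝ)))) * ξ ((A.map (Int.cast : ℤ → ℝ)).transpose⁻¹.mulVec x + (A.map (Int.cast : ℤ → ℝ)).transpose⁻¹.mulVec (fun i => (v i : ℝ)))‖) := by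
    intro k
    apply summable_B A hA
      (fun w => ‖(starRingEnd ℂ) (Ψ k ((A.map (Int.cast : ℤ → ℝ)).transpose⁻¹.mulVec x + w)) * ξ ((A.map (Int.cast : ℤ → ℝ)).transpose⁻¹.mulVec x + w)‖)
      (fun w => norm_nonneg _)
    intro y'
    exact (ha k ((A.map (Int.cast : ℤ → ℝ)).transpose⁻¹.mulVec x + y')).congr (fun v => by rw [add_assoc])
  have hsummable : ∀ (k : Fin r) (l : Fin d),
      Summable (fun v : Fin n → ℤ =>
        ‖(starRingEnd ℂ) (Deps n A (β l) (Ψ k) (x + fun i => (v i : ℝ))) *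
          Dil n A ξ (x + fun i => (v i : ℝ))‖) := by
    intro k l
    exact ((hcore k).mul_left (((Real.sqrt |(A.det : ℝ)|)⁻¹ : ℝ) * ((Real.sqrt |(A.det : ℝ)|)⁻¹ : ℝ))).congr
      (fun v => (summand_norm A (β l) (Ψ k) ξ x v).symm)
  refine ⟨hsummable, ?_⟩
  -- summability of the modulated series
  have hGsummable : ∀ (k : Fin r) (l : Fin d),
      Summable (fun v : Fin n → ℤ =>
        e (∑ i, (β l i : ℝ) * ((A.map (Int.cast : ℤ → ℝ)).transpose⁻¹.mulVec (fun i => (v i : ℝ))) i) *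
          ((starRingEnd ℂ) (Ψ k ((A.map (Int.cast : ℤ → ℝ)).transpose⁻¹.mulVec x + (A.map (Int.cast : ℤ → ℝ)).transpose⁻¹.mulVec (fun i => (v i : ℝ)))) * ξ ((A.map (Int.cast : ℤ → ℝ)).transpose⁻¹.mulVec x + (A.map (Int.cast : ℤ → ℝ)).transpose⁻¹.mulVec (fun i => (v i : ℝ))))) := by
    intro k l
    apply Summable.of_norm
    have heqn : ∀ v : Fin n → ℤ,
        ‖e (∑ i, (β l i : ℝ) * ((A.map (Int.cast : ℤ → ℝ)).transpose⁻¹.mulVec (fun i => (v i : ℝ))) i) *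
          ((starRingEnd ℂ) (Ψ k ((A.map (Int.cast : ℤ → ℝ)).transpose⁻¹.mulVec x + (A.map (Int.cast : ℤ → ℝ)).transpose⁻¹.mulVec (fun i => (v i : ℝ)))) * ξ ((A.map (Int.cast : ℤ → ℝ)).transpose⁻¹.mulVec x + (A.map (Int.cast : ℤ → ℝ)).transpose⁻¹.mulVec (fun i => (v i : ℝ))))‖ =
        ‖(starRingEnd ℂ) (Ψ k ((A.map (Int.cast : ℤ → ℝ)).transpose⁻¹.mulVec x + (A.map (Int.cast : ℤ → ℝ)).transpose⁻¹.mulVec (fun i => (v i : ℝ)))) * ξ ((A.map (Int.cast : ℤ → ℝ)).transpose⁻¹.mulVec x + (A.map (Int.cast : ℤ → ℝ)).transpose⁻¹.mulVec (fun i => (v i : ℝ)))‖ :=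
      fun v => by rw [norm_mul, e_norm, one_mul]
    exact (hcore k).congr (fun v => (heqn v).symm)
  -- step 1 : rewrite the inner tsum
  have hstep1 : ∀ (k : Fin r) (l : Fin d),
      (∑' v : Fin n → ℤ,
        (starRingEnd ℂ) (Deps n A (β l) (Ψ k) (x + fun i => (v i : ℝ))) *
          Dil n A ξ (x + fun i => (v i : ℝ))) =
      ((((Real.sqrt |(A.det : ℝ)|)⁻¹ : ℝ) : ℂ)) * ((Real.sqrt |(A.det : ℝ)|)⁻¹ : ℝ) * e (∑ i, (β l i : ℝ) * ((A.map (Int.cast : ℤ → ℝ)).transpose⁻¹.mulVec x) i) *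
        ∑' v : Fin n → ℤ,
          e (∑ i, (β l i : ℝ) * ((A.map (Int.cast : ℤ → ℝ)).transpose⁻¹.mulVec (fun i => (v i : ℝ))) i) *
            ((starRingEnd ℂ) (Ψ k ((A.map (Int.cast : ℤ → ℝ)).transpose⁻¹.mulVec x + (A.map (Int.cast : ℤ → ℝ)).transpose⁻¹.mulVec (fun i => (v i : ℝ)))) * ξ ((A.map (Int.cast : ℤ → ℝ)).transpose⁻¹.mulVec x + (A.map (Int.cast : ℤ → ℝ)).transpose⁻¹.mulVec (fun i => (v i : ℝ)))) := by
    intro k l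
    rw [tsum_congr (fun v => summand_eq A (β l) (Ψ k) ξ x v), tsum_mul_left]
  -- step 2 : evaluate the character-weighted tsum
  have hstep2 : ∀ k : Fin r,
      (∑' v : Fin n → ℤ,
        (∑ l : Fin d, e (∑ i, (β l i : ℝ) * ((A.map (Int.cast : ℤ → ℝ)).transpose⁻¹.mulVec (fun i => (v i : ℝ))) i)) *
          ((starRingEnd ℂ) (Ψ k ((A.map (Int.cast : ℤ → ℝ)).transpose⁻¹.mulVec x + (A.map (Int.cast : ℤ → ℝ)).transpose⁻¹.mulVec (fun i => (v i : ℝ)))) * ξ ((A.map (Int.cast : ℤ → ℝ)).transpose⁻¹.mulVec x + (A.map (Int.cast : ℤ → ℝ)).transpose⁻¹.mulVec (fun i => (v i : ℝ))))) =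
      ((d : ℕ) : ℂ) * ∑' v : Fin n → ℤ,
        (starRingEnd ℂ) (Ψ k ((A.map (Int.cast : ℤ → ℝ)).transpose⁻¹.mulVec x + fun i => (v i : ℝ))) *
          ξ ((A.map (Int.cast : ℤ → ℝ)).transpose⁻¹.mulVec x + fun i => (v i : ℝ)) := by
    intro k
    have hinj : Function.Injective (fun w : Fin n → ℤ => A.transpose.mulVec w) :=
      intMulVec_inj A hA
    have hvan : ∀ v : Fin n → ℤ,
        v ∉ Set.range (fun w : Fin n → ℤ => A.transpose.mulVec w) →
        (∑ l : Fin d, e (∑ i, (β l i : ℝ) * ((A.map (Int.cast : ℤ → ℝ)).transpose⁻¹.mulVec (fun i => (v i : ℝ))) i)) *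
          ((starRingEnd ℂ) (Ψ k ((A.map (Int.cast : ℤ → ℝ)).transpose⁻¹.mulVec x + (A.map (Int.cast : ℤ → ℝ)).transpose⁻¹.mulVec (fun i => (v i : ℝ)))) * ξ ((A.map (Int.cast : ℤ → ℝ)).transpose⁻¹.mulVec x + (A.map (Int.cast : ℤ → ℝ)).transpose⁻¹.mulVec (fun i => (v i : ℝ)))) = 0 := by
      intro v hv
      have hv' : v ∉ LinearMap.range A.transpose.mulVecLin := by
        intro hmem
        obtain ⟨w, hw⟩ := hmem
        rw [Matrix.mulVecLin_apply] at hw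
        exact hv ⟨w, hw⟩
      rw [char_sum_not_mem A hA d β hβ v hv', zero_mul]
    have hsup : Function.support (fun v : Fin n → ℤ =>
        (∑ l : Fin d, e (∑ i, (β l i : ℝ) * ((A.map (Int.cast : ℤ → ℝ)).transpose⁻¹.mulVec (fun i => (v i : ℝ))) i)) *
          ((starRingEnd ℂ) (Ψ k ((A.map (Int.cast : ℤ → ℝ)).transpose⁻¹.mulVec x + (A.map (Int.cast : ℤ → ℝ)).transpose⁻¹.mulVec (fun i => (v i : ℝ)))) * ξ ((A.map (Int.cast : ℤ → ℝ)).transpose⁻¹.mulVec x + (A.map (Int.cast : ℤ → ℝ)).transpose⁻¹.mulVec (fun i => (v i : ℝ))))) ⊆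
        Set.range (fun w : Fin n → ℤ => A.transpose.mulVec w) := by
      intro v hv
      by_contra hnot
      exact hv (hvan v hnot)
    rw [← hinj.tsum_eq hsup]
    have hterm : ∀ w : Fin n → ℤ,
        (∑ l : Fin d, e (∑ i, (β l i : ℝ) * ((A.map (Int.cast : ℤ → ℝ)).transpose⁻¹.mulVec (fun i => ((A.transpose.mulVec w) i : ℝ))) i)) *
          ((starRingEnd ℂ) (Ψ k ((A.map (Int.cast : ℤ → ℝ)).transpose⁻¹.mulVec x + (A.map (Int.cast : ℤ → ℝ)).transpose⁻¹.mulVec (fun i => ((A.transpose.mulVec w) i : ℝ)))) * ξ ((A.map (Int.cast : ℤ → ℝ)).transpose⁻¹.mulVec x + (A.map (Int.cast : ℤ → ℝ)).transpose⁻¹.mulVec (fun i => ((A.transpose.mulVec w) i : ℝ)))) =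
        ((d : ℕ) : ℂ) *
          ((starRingEnd ℂ) (Ψ k ((A.map (Int.cast : ℤ → ℝ)).transpose⁻¹.mulVec x + fun i => (w i : ℝ))) *
            ξ ((A.map (Int.cast : ℤ → ℝ)).transpose⁻¹.mulVec x + fun i => (w i : ℝ))) := by
      intro w
      have hmem : A.transpose.mulVec w ∈ LinearMap.range A.transpose.mulVecLin :=
        ⟨w, by rw [Matrix.mulVecLin_apply]⟩
      have hBW : (A.map (Int.cast : ℤ → ℝ)).transpose⁻¹.mulVec (fun i => ((A.transpose.mulVec w) i : ℝ)) = fun i => (w i : ℝ) := by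
        rw [cast_mulVec, B_T A hA]
      rw [char_sum_mem A hA d β (A.transpose.mulVec w) hmem, hBW]
    rw [tsum_congr hterm, tsum_mul_left]
  -- step 3 : sum over l
  have hstep3 : ∀ k : Fin r,
      (∑ l : Fin d, Deps n A (β l) (Ψ k) x *
        ∑' v : Fin n → ℤ,
          (starRingEnd ℂ) (Deps n A (β l) (Ψ k) (x + fun i => (v i : ℝ))) *
            Dil n A ξ (x + fun i => (v i : ℝ))) =
      ((((Real.sqrt |(A.det : ℝ)|)⁻¹ : ℝ) : ℂ)) * ((Real.sqrt |(A.det : ℝ)|)⁻¹ : ℝ) * ((Real.sqrt |(A.det : ℝ)|)⁻¹ : ℝ) * ((d : ℕ) : ℂ) *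
        (Ψ k ((A.map (Int.cast : ℤ → ℝ)).transpose⁻¹.mulVec x) * ∑' v : Fin n → ℤ,
          (starRingEnd ℂ) (Ψ k ((A.map (Int.cast : ℤ → ℝ)).transpose⁻¹.mulVec x + fun i => (v i : ℝ))) *
            ξ ((A.map (Int.cast : ℤ → ℝ)).transpose⁻¹.mulVec x + fun i => (v i : ℝ))) := by
    intro k
    have h1 : ∀ l : Fin d, Deps n A (β l) (Ψ k) x *
        (∑' v : Fin n → ℤ,
          (starRingEnd ℂ) (Deps n A (β l) (Ψ k) (x + fun i => (v i : ℝ))) *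
            Dil n A ξ (x + fun i => (v i : ℝ))) =
        (((((Real.sqrt |(A.det : ℝ)|)⁻¹ : ℝ) : ℂ)) * ((Real.sqrt |(A.det : ℝ)|)⁻¹ : ℝ) * ((Real.sqrt |(A.det : ℝ)|)⁻¹ : ℝ)) * Ψ k ((A.map (Int.cast : ℤ → ℝ)).transpose⁻¹.mulVec x) *
          ∑' v : Fin n → ℤ,
            e (∑ i, (β l i : ℝ) * ((A.map (Int.cast : ℤ → ℝ)).transpose⁻¹.mulVec (fun i => (v i : ℝ))) i) *
              ((starRingEnd ℂ) (Ψ k ((A.map (Int.cast : ℤ → ℝ)).transpose⁻¹.mulVec x + (A.map (Int.cast : ℤ → ℝ)).transpose⁻¹.mulVec (fun i => (v i : ℝ)))) * ξ ((A.map (Int.cast : ℤ → ℝ)).transpose⁻¹.mulVec x + (A.map (Int.cast : ℤ → ℝ)).transpose⁻¹.mulVec (fun i => (v i : ℝ)))) := by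
      intro l
      rw [hstep1 k l]
      have hD : Deps n A (β l) (Ψ k) x =
          ((((Real.sqrt |(A.det : ℝ)|)⁻¹ : ℝ) : ℂ)) * e (-(∑ i, (β l i : ℝ) * ((A.map (Int.cast : ℤ → ℝ)).transpose⁻¹.mulVec x) i)) * Ψ k ((A.map (Int.cast : ℤ → ℝ)).transpose⁻¹.mulVec x) := rfl
      rw [hD]
      have hring : ((((Real.sqrt |(A.det : ℝ)|)⁻¹ : ℝ) : ℂ)) * e (-(∑ i, (β l i : ℝ) * ((A.map (Int.cast : ℤ → ℝ)).transpose⁻¹.mulVec x) i)) * Ψ k ((A.map (Int.cast : ℤ → ℝ)).transpose⁻¹.mulVec x) *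
          (((((Real.sqrt |(A.det : ℝ)|)⁻¹ : ℝ) : ℂ)) * ((Real.sqrt |(A.det : ℝ)|)⁻¹ : ℝ) * e (∑ i, (β l i : ℝ) * ((A.map (Int.cast : ℤ → ℝ)).transpose⁻¹.mulVec x) i) *
            ∑' v : Fin n → ℤ,
              e (∑ i, (β l i : ℝ) * ((A.map (Int.cast : ℤ → ℝ)).transpose⁻¹.mulVec (fun i => (v i : ℝ))) i) *
                ((starRingEnd ℂ) (Ψ k ((A.map (Int.cast : ℤ → ℝ)).transpose⁻¹.mulVec x + (A.map (Int.cast : ℤ → ℝ)).transpose⁻¹.mulVec (fun i => (v i : ℝ)))) * ξ ((A.map (Int.cast : ℤ → ℝ)).transpose⁻¹.mulVec x + (A.map (Int.cast : ℤ → ℝ)).transpose⁻¹.mulVec (fun i => (v i : ℝ))))) =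
          (((((Real.sqrt |(A.det : ℝ)|)⁻¹ : ℝ) : ℂ)) * ((Real.sqrt |(A.det : ℝ)|)⁻¹ : ℝ) * ((Real.sqrt |(A.det : ℝ)|)⁻¹ : ℝ)) * Ψ k ((A.map (Int.cast : ℤ → ℝ)).transpose⁻¹.mulVec x) *
            ((e (-(∑ i, (β l i : ℝ) * ((A.map (Int.cast : ℤ → ℝ)).transpose⁻¹.mulVec x) i)) * e (∑ i, (β l i : ℝ) * ((A.map (Int.cast : ℤ → ℝ)).transpose⁻¹.mulVec x) i)) *
              ∑' v : Fin n → ℤ,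
                e (∑ i, (β l i : ℝ) * ((A.map (Int.cast : ℤ → ℝ)).transpose⁻¹.mulVec (fun i => (v i : ℝ))) i) *
                  ((starRingEnd ℂ) (Ψ k ((A.map (Int.cast : ℤ → ℝ)).transpose⁻¹.mulVec x + (A.map (Int.cast : ℤ → ℝ)).transpose⁻¹.mulVec (fun i => (v i : ℝ)))) * ξ ((A.map (Int.cast : ℤ → ℝ)).transpose⁻¹.mulVec x + (A.map (Int.cast : ℤ → ℝ)).transpose⁻¹.mulVec (fun i => (v i : ℝ))))) := by ring
      rw [hring, e_neg_mul, one_mul]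
    rw [Finset.sum_congr rfl (fun l _ => h1 l), ← Finset.mul_sum,
      ← Summable.tsum_finsetSum (fun l _ => hGsummable k l)]
    have hinner : ∀ v : Fin n → ℤ,
        (∑ l : Fin d, e (∑ i, (β l i : ℝ) * ((A.map (Int.cast : ℤ → ℝ)).transpose⁻¹.mulVec (fun i => (v i : ℝ))) i) *
          ((starRingEnd ℂ) (Ψ k ((A.map (Int.cast : ℤ → ℝ)).transpose⁻¹.mulVec x + (A.map (Int.cast : ℤ → ℝ)).transpose⁻¹.mulVec (fun i => (v i : ℝ)))) * ξ ((A.map (Int.cast : ℤ → ℝ)).transpose⁻¹.mulVec x + (A.map (Int.cast : ℤ → ℝ)).transpose⁻¹.mulVec (fun i => (v i : ℝ))))) =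
        (∑ l : Fin d, e (∑ i, (β l i : ℝ) * ((A.map (Int.cast : ℤ → ℝ)).transpose⁻¹.mulVec (fun i => (v i : ℝ))) i)) *
          ((starRingEnd ℂ) (Ψ k ((A.map (Int.cast : ℤ → ℝ)).transpose⁻¹.mulVec x + (A.map (Int.cast : ℤ → ℝ)).transpose⁻¹.mulVec (fun i => (v i : ℝ)))) * ξ ((A.map (Int.cast : ℤ → ℝ)).transpose⁻¹.mulVec x + (A.map (Int.cast : ℤ → ℝ)).transpose⁻¹.mulVec (fun i => (v i : ℝ)))) :=
      fun v => (Finset.sum_mul _ _ _).symm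
    rw [tsum_congr hinner, hstep2 k]
    ring
  rw [Finset.sum_congr rfl (fun k _ => hstep3 k), ← Finset.mul_sum, ← hb ((A.map (Int.cast : ℤ → ℝ)).transpose⁻¹.mulVec x), hccc]
  rfl
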